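/- For N_S > 0, N_B > 0, η ∈ (0,1), the TMSV QFI I(N_S) = 4[N_S(N_S+1)(1-η²) + η²(N_S + N_B + 2N_S N_B)] / ((1-η²)[1 + (1-η²)(N_S + N_B + 2N_S N_B)]) satisfies: (a) I(N_S) - 4N_S/((1-η²)(1+2N_B)) → C(η, N_B) as N_S → ∞ for some finite constant C; (b) I(0) = 4η² N_B / ((1-η²)(1 + N_B(1-η²))) > 0. -/

import Mathlib

/-
With a = 1 - η² and b = 1 + 2N_B, the total photon number N_S + N_B + 2N_S N_B equals
b N_S + N_B, so the quadratic terms of I(N_S) and of 4N_S/(ab) cancel: their difference is a ratio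
of two affine functions of N_S, with leading coefficient a²b² ≠ 0 in the denominator, and hence
converges. At N_S = 0 the formula reduces to 4η²N_B / (a(1 + aN_B)), positive since 0 < a.
-/

noncomputable def Itmsv (NB η NS : ℝ) : ℝ :=
  4*(NS*(NS+1)*(1-η^2) + η^2*(NS + NB + 2*NS*NB)) /
    ((1-η^2)*(1 + (1-η^2)*(NS + NB + 2*NS*NB)))

open Filter Topology

theorem tendsto_affine_div_affine_atTop {p q r s : ℝ} (hr : r ≠ 0) :
    Tendsto (fun x => (p * x + q) / (r * x + s)) atTop (𝓝 (p / r)) := by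
  have hinv : Tendsto (fun x : ℝ => x⁻¹) atTop (𝓝 0) := tendsto_inv_atTop_zero
  have hlim : Tendsto (fun x : ℝ => (p + q * x⁻¹) / (r + s * x⁻¹)) atTop
      (𝓝 ((p + q * 0) / (r + s * 0))) :=
    ((hinv.const_mul q).const_add p).div ((hinv.const_mul s).const_add r) (by simpa using hr)
  simp only [mul_zero, add_zero] at hlim
  refine hlim.congr' ?_
  filter_upwards [eventually_ne_atTop 0] with x hx
  rw [← mul_div_mul_left _ _ hx]
  congr 1 <;> field_simp

theorem Itmsv_sub_linear_eq {NB η NS : ℝ} (ha : 0 < 1 - η^2) (hNB : 0 ≤ NB) (hNS : 0 ≤ NS) :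
    Itmsv NB η NS - 4*NS/((1-η^2)*(1+2*NB)) =
      (4*((1+2*NB)*((1-η^2) + η^2*(1+2*NB)) - 1 - (1-η^2)*NB) * NS + 4*(1+2*NB)*η^2*NB) /
        ((1-η^2)^2*(1+2*NB)^2 * NS + (1-η^2)*(1+2*NB)*(1+(1-η^2)*NB)) := by
  have hS : 0 < 1 + (1-η^2)*(NS + NB + 2*NS*NB) := by positivity
  unfold Itmsv
  rw [div_sub_div _ _ (by positivity) (by positivity), div_eq_div_iff (by positivity) (by positivity)]
  ring

theorem tendsto_Itmsv_sub_linear {NB η : ℝ} (ha : 0 < 1 - η^2) (hNB : 0 ≤ NB) :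
    Tendsto (fun NS => Itmsv NB η NS - 4*NS/((1-η^2)*(1+2*NB))) atTop
      (𝓝 (4*((1+2*NB)*((1-η^2) + η^2*(1+2*NB)) - 1 - (1-η^2)*NB) /
        ((1-η^2)^2*(1+2*NB)^2))) := by
  refine Tendsto.congr' ?_ (tendsto_affine_div_affine_atTop (q := 4*(1+2*NB)*η^2*NB)
    (s := (1-η^2)*(1+2*NB)*(1+(1-η^2)*NB)) (by positivity))
  filter_upwards [eventually_ge_atTop 0] with NS hNS
  exact (Itmsv_sub_linear_eq ha hNB hNS).symm

theorem Itmsv_zero (NB η : ℝ) :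
    Itmsv NB η 0 = 4*η^2*NB / ((1-η^2)*(1 + NB*(1-η^2))) := by
  unfold Itmsv
  ring_nf

theorem tmsv_asymptotics_and_shadow (NB η : ℝ) (hNB : 0 < NB)
    (hη0 : 0 < η) (hη1 : η < 1) :
    (∃ C : ℝ, Filter.Tendsto
      (fun NS => Itmsv NB η NS - 4*NS/((1-η^2)*(1+2*NB))) Filter.atTop (nhds C)) ∧
    Itmsv NB η 0 = 4*η^2*NB / ((1-η^2)*(1 + NB*(1-η^2))) ∧
    0 < Itmsv NB η 0 := by
  have ha : 0 < 1 - η^2 := by nlinarith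
  refine ⟨⟨_, tendsto_Itmsv_sub_linear ha hNB.le⟩, Itmsv_zero NB η, ?_⟩
  rw [Itmsv_zero]
  positivity
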